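/- Let λ₁ ∈ ℚ, set λ₂ := λ₁ (i.e. p₁ = 1), let p₂ ∈ ℕ with p₂ ≥ 2, set λ₃ := λ₂ + p₂ − 1, and let β ∈ ℂ. Let E be a rank-3 (a,b)-module presented by (λ₁,λ₁,λ₃; S₁, 1 + β·X^{p₂}), where S₁ ∈ ℂ⟦X⟧ has constant term 1, and suppose α := coeff₁ S₁ is nonzero. Then E also admits the normal-form presentation (λ₁,λ₁,λ₃; 1 + α·X, 1 + β·X^{p₂}). -/

import Mathlib

open PowerSeries

/-- `a` is an (a,b)-module structure on the `ℂ⟦X⟧`-module `E`: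
`a (S • x) = S • a x + (X² * S′) • x`. -/
def IsABStructure (E : Type*) [AddCommGroup E] [Module ℂ E]
    [Module (PowerSeries ℂ) E] [IsScalarTower ℂ (PowerSeries ℂ) E]
    (a : E →ₗ[ℂ] E) : Prop :=
  ∀ (S : PowerSeries ℂ) (x : E),
    a (S • x) = S • a x + ((X : PowerSeries ℂ) ^ 2 * derivative ℂ S) • x

/-- The rank-3 (a,b)-module `(E, a)` is presented by `(λ₁, λ₂, λ₃; S₁, S₂)` :
there is a `ℂ⟦X⟧`-basis `(e₁,e₂,e₃)` with `a e₁ = λ₁ • (X • e₁)`,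
`a e₂ = λ₂ • (X • e₂) + S₁ • e₁` and `a e₃ = λ₃ • (X • e₃) + S₂ • e₂`. -/
def PresentedRank3 (E : Type*) [AddCommGroup E] [Module ℂ E]
    [Module (PowerSeries ℂ) E] [IsScalarTower ℂ (PowerSeries ℂ) E]
    (a : E →ₗ[ℂ] E) (l1 l2 l3 : ℂ) (S1 S2 : PowerSeries ℂ) : Prop :=
  ∃ e : Module.Basis (Fin 3) (PowerSeries ℂ) E,
    a (e 0) = l1 • ((X : PowerSeries ℂ) • e 0) ∧
    a (e 1) = l2 • ((X : PowerSeries ℂ) • e 1) + S1 • e 0 ∧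
    a (e 2) = l3 • ((X : PowerSeries ℂ) • e 2) + S2 • e 1

/-! Change the basis unitriangularly: `e₂ ↦ e₂ + T e₁`, `e₃ ↦ e₃ + W e₂ + V e₁`. Since
`a (T • v) = T • a v + X² T′ • v`, replacing `u` by `u + T v` with `a v = ν X v + …` and
`a u = μ X u + …` changes the structure series by `X² T′ + (ν - μ) X T`, an operator sending `Xⁿ` to
`(n + ν - μ) Xⁿ⁺¹`. Hence `T` absorbs everything in `S₁` beyond `1 + α X`; a monomial
`W = w X^{p₂-1}` leaves the `e₂`-component unchanged because `λ₃ - λ₁ = p₂ - 1`; and `V` removes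
the `e₁`-component once its only resonant coefficient, at `X^{p₂}`, has been killed by the choice
`w = coeff_{p₂} (S₂ T) / α`, which needs `α ≠ 0`. -/

noncomputable def eulerOp (c : ℂ) (V : PowerSeries ℂ) : PowerSeries ℂ :=
  X ^ 2 * derivative ℂ V + C c * X * V

lemma coeff_zero_eulerOp (c : ℂ) (V : PowerSeries ℂ) : coeff 0 (eulerOp c V) = 0 := by
  simp [eulerOp, coeff_zero_eq_constantCoeff]

lemma coeff_succ_eulerOp (c : ℂ) (V : PowerSeries ℂ) (n : ℕ) :
    coeff (n + 1) (eulerOp c V) = (n + c) * coeff n V := by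
  rcases n with _ | n
  · simp [eulerOp, coeff_X_pow_mul', mul_assoc, coeff_C_mul]
  · rw [eulerOp, map_add, show n + 1 + 1 = n + 2 by rfl, coeff_X_pow_mul, coeff_derivative,
      mul_assoc, coeff_C_mul, mul_comm X, coeff_succ_mul_X]
    push_cast; ring

lemma exists_eulerOp_eq (c : ℂ) (G : PowerSeries ℂ) (h0 : coeff 0 G = 0)
    (hres : ∀ n : ℕ, (n : ℂ) + c = 0 → coeff (n + 1) G = 0) :
    ∃ V, (∀ n : ℕ, (n : ℂ) + c = 0 → coeff n V = 0) ∧ eulerOp c V = G := by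
  refine ⟨mk fun n => coeff (n + 1) G / (n + c), fun n hn => by simp [hn], ?_⟩
  ext (_ | n)
  · rw [coeff_zero_eulerOp, h0]
  · rw [coeff_succ_eulerOp, coeff_mk]
    by_cases hn : (n : ℂ) + c = 0
    · rw [hn, zero_mul, hres n hn]
    · exact mul_div_cancel₀ _ hn

lemma eulerOp_C_mul_X_pow (w : ℂ) (m : ℕ) : eulerOp (-m) (C w * X ^ m) = 0 := by
  ext (_ | n)
  · rw [coeff_zero_eulerOp, map_zero]
  · rw [coeff_succ_eulerOp, coeff_C_mul_X_pow, map_zero]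
    split_ifs with h
    · subst h; ring
    · ring

lemma exists_add_eulerOp_zero_eq (S : PowerSeries ℂ) (hS : constantCoeff S = 1) :
    ∃ T, coeff 0 T = 0 ∧ S + eulerOp 0 T = 1 + C (coeff 1 S) * X := by
  obtain ⟨T, hT0, hT⟩ := exists_eulerOp_eq 0 (1 + C (coeff 1 S) * X - S)
    (by simp [coeff_zero_eq_constantCoeff, hS]) fun n hn => by
      obtain rfl : n = 0 := by simpa using hn
      simp [coeff_one]
  exact ⟨T, hT0 0 (by simp), by rw [hT]; ring⟩

lemma exists_eulerOp_eq_mul_sub (S₁ S₂ T : PowerSeries ℂ) (hS₁ : coeff 1 S₁ ≠ 0)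
    (hT : coeff 0 T = 0) {m : ℕ} (hm : 1 ≤ m) :
    ∃ V, eulerOp (-m) V
      = S₂ * T - C (coeff (m + 1) (S₂ * T) / coeff 1 S₁) * X ^ m * S₁ := by
  refine (exists_eulerOp_eq (-m) _ ?_ ?_).imp fun _ hV => hV.2
  · rw [coeff_zero_eq_constantCoeff_apply] at hT
    simp [coeff_zero_eq_constantCoeff, hT, Nat.one_le_iff_ne_zero.mp hm]
  · intro n hn
    obtain rfl : n = m := by exact_mod_cast add_neg_eq_zero.mp hn
    rw [map_sub, mul_assoc, coeff_C_mul, add_comm n, coeff_X_pow_mul, div_mul_cancel₀ _ hS₁,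
      sub_self]

lemma Module.Basis.exists_unitriangular_fin_three {R M : Type*} [CommRing R] [AddCommGroup M]
    [Module R M] (e : Module.Basis (Fin 3) R M) (T W V : R) :
    ∃ e' : Module.Basis (Fin 3) R M,
      e' 0 = e 0 ∧ e' 1 = e 1 + T • e 0 ∧ e' 2 = e 2 + W • e 1 + V • e 0 := by
  let A : Matrix (Fin 3) (Fin 3) R := !![1, T, V; 0, 1, W; 0, 0, 1]
  have hA : IsUnit A.det := by simp [A, Matrix.det_fin_three]
  refine ⟨e.map (A.toLinearEquiv e hA), ?_, ?_, ?_⟩ <;>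
    simp [A, Matrix.toLin_self, Fin.sum_univ_three] <;> abel

section
variable {E : Type*} [AddCommGroup E] [Module ℂ E] [Module (PowerSeries ℂ) E]
  [IsScalarTower ℂ (PowerSeries ℂ) E]

lemma smul_eq_C_smul (c : ℂ) (x : E) : c • x = C c • x := by
  rw [← algebraMap_smul (PowerSeries ℂ) c x, PowerSeries.algebraMap_apply]
  simp

lemma IsABStructure.map_add_smul {a : E →ₗ[ℂ] E} (ha : IsABStructure E a) {μ ν : ℂ}
    {u v r r' : E} (T : PowerSeries ℂ) (hu : a u = μ • ((X : PowerSeries ℂ) • u) + r)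
    (hv : a v = ν • ((X : PowerSeries ℂ) • v) + r') :
    a (u + T • v) =
      μ • ((X : PowerSeries ℂ) • (u + T • v)) + (r + T • r' + eulerOp (ν - μ) T • v) := by
  rw [map_add, ha, hu, hv, eulerOp]
  simp only [smul_eq_C_smul, map_sub, smul_add, add_smul, sub_mul, sub_smul, smul_smul]
  ring_nf
  abel
end

/-- For `λ₂ = λ₁` (i.e. `p₁ = 1`), `p₂ ≥ 2`,
`λ₃ = λ₂ + p₂ - 1`, a rank-3 fresco presented by `(λ₁,λ₁,λ₃; S₁, 1 + β·X^{p₂})`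
with `α = coeff₁ S₁ ≠ 0` admits the normal-form presentation
`(λ₁,λ₁,λ₃; 1 + α·X, 1 + β·X^{p₂})`. -/
theorem stmt9 (lam1 : ℚ) (p2 : ℕ) (hp2 : 2 ≤ p2)
    (lam3 : ℚ) (hlam3 : lam3 = lam1 + p2 - 1)
    (β : ℂ)
    (E : Type*) [AddCommGroup E] [Module ℂ E]
    [Module (PowerSeries ℂ) E] [IsScalarTower ℂ (PowerSeries ℂ) E]
    (a : E →ₗ[ℂ] E) (ha : IsABStructure E a)
    (S1 : PowerSeries ℂ) (hS1 : constantCoeff S1 = 1)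
    (hE : PresentedRank3 E a (lam1 : ℂ) (lam1 : ℂ) (lam3 : ℂ)
      S1 (1 + C β * X ^ p2))
    (α : ℂ) (hα : α = coeff 1 S1) (hα0 : α ≠ 0) :
    PresentedRank3 E a (lam1 : ℂ) (lam1 : ℂ) (lam3 : ℂ)
      (1 + C α * X) (1 + C β * X ^ p2) := by
  obtain ⟨e, he0, he1, he2⟩ := hE
  have he0' := he0.trans (add_zero _).symm
  obtain ⟨T, hT0, hT⟩ := exists_add_eulerOp_zero_eq S1 hS1
  obtain ⟨m, rfl⟩ : ∃ m, p2 = m + 1 := ⟨p2 - 1, by omega⟩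
  have hlam : (lam1 : ℂ) - lam3 = -m := by rw [hlam3]; push_cast; ring
  obtain ⟨V, hV⟩ := exists_eulerOp_eq_mul_sub S1 (1 + C β * X ^ (m + 1)) T (hα ▸ hα0) hT0
    (by omega : 1 ≤ m)
  set W := C (coeff (m + 1) ((1 + C β * X ^ (m + 1)) * T) / coeff 1 S1) * X ^ m
  obtain ⟨e', h0, h1, h2⟩ := e.exists_unitriangular_fin_three T W V
  have hW := ha.map_add_smul W he2 he1
  rw [hlam, eulerOp_C_mul_X_pow, zero_smul, add_zero] at hW
  refine ⟨e', h0 ▸ he0, ?_, ?_⟩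
  · rw [h1, h0, ha.map_add_smul T he1 he0', sub_self, smul_zero, add_zero, ← add_smul, hT, hα]
  · rw [h2, h1, ha.map_add_smul V hW he0', hlam, hV]
    simp only [smul_zero, add_zero, sub_smul, smul_add, smul_smul]
    abel
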